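/- Left lemma: let p = ⟨L ↩ K ↪ R⟩ be a rule of finite directed multigraphs and let ac be a condition over R. Then there exists a condition ac' over L such that for every direct transformation G ⇒_{p,g,h} H with match g : L → G and comatch h : R → H: g satisfies ac' if and only if h satisfies ac. -/

import Mathlib

/-- A directed multigraph: a set of nodes, a set of edges, and source/target maps. -/
structure MGraph : Type 1 where
  V : Type
  E : Type
  s : E → V
  t : E → V

/-- A morphism of directed multigraphs: maps on nodes and edges compatible with
sources and targets. -/
structure GraphHom (G H : MGraph) : Type where
  fV : G.V → H.V
  fE : G.E → H.E
  src : ∀ e, H.s (fE e) = fV (G.s e)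
  tgt : ∀ e, H.t (fE e) = fV (G.t e)

/-- Composition of graph morphisms. -/
def GraphHom.comp {G H K : MGraph} (g : GraphHom H K) (f : GraphHom G H) :
    GraphHom G K where
  fV := g.fV ∘ f.fV
  fE := g.fE ∘ f.fE
  src e := by simp [g.src, f.src]
  tgt e := by simp [g.tgt, f.tgt]

/-- A graph morphism is injective if it is injective on nodes and on edges. -/
def GraphHom.Injective {G H : MGraph} (f : GraphHom G H) : Prop :=
  Function.Injective f.fV ∧ Function.Injective f.fE

/-- A graph is finite if its node set and edge set are finite. -/
def MGraph.Finite (G : MGraph) : Prop :=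
  _root_.Finite G.V ∧ _root_.Finite G.E

/-- Nested graph conditions over a graph `A`: `true`, existential conditions
`∃(a, c)` along an injective morphism `a : A → C` into a finite graph `C`,
negation, and (binary) conjunction. -/
inductive Cond : MGraph → Type 1 where
  | tru (A : MGraph) : Cond A
  | ex {A C : MGraph} (a : GraphHom A C) (hC : C.Finite) (ha : a.Injective)
      (c : Cond C) : Cond A
  | not {A : MGraph} (c : Cond A) : Cond A
  | and {A : MGraph} (c₁ c₂ : Cond A) : Cond A

/-- Satisfaction of a condition over `A` by a morphism `A → G`. -/
def Sat {G : MGraph} : {A : MGraph} → GraphHom A G → Cond A → Prop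
  | _, _, Cond.tru _ => True
  | _, p, Cond.ex a _ _ c => ∃ q, GraphHom.Injective q ∧ q.comp a = p ∧ Sat q c
  | _, p, Cond.not c => ¬ Sat p c
  | _, p, Cond.and c₁ c₂ => Sat p c₁ ∧ Sat p c₂

/-- A commuting square of graph morphisms is a pushout square if it commutes and
satisfies the universal property of pushouts in the category of directed
multigraphs. -/
structure IsPushoutSq {A B C D : MGraph} (f : GraphHom A B) (g : GraphHom A C)
    (h : GraphHom B D) (i : GraphHom C D) : Prop where
  comm : h.comp f = i.comp g
  desc : ∀ {Z : MGraph} (u : GraphHom B Z) (v : GraphHom C Z), u.comp f = v.comp g →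
    ∃! w : GraphHom D Z, w.comp h = u ∧ w.comp i = v

/-!
`ac'` is built by recursion on `ac`; the only real case is `∃(a : R ↪ C, c)`. If `a` violates
the dangling condition relative to `r`, no comatch extends along `a`, and `ac'` is `false`.
Otherwise deleting the image of `R ∖ r(K)` from `C` leaves a subgraph `Y` with `C = R +_K Y`;
put `C' = L +_K Y` and `ac' = ∃(L → C', c')`, where `c'` is obtained recursively for the rule
`C' ↩ Y ↪ C`. Pushouts of injective maps are described elementwise (jointly surjective legs
meeting exactly in the image of the corner). With this description an injective `C' → G`
extending `g`, and an injective `C → H` extending `h`, each correspond to an injective `Y → D`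
extending `k` for which the new squares over `Y` are again pushouts, so the induction hypothesis
applies to them.
-/

open Function

section InjPushout

variable {α β γ δ ε : Type*}

structure IsInjPushout (f : α → β) (g : α → γ) (h : β → δ) (i : γ → δ) : Prop where
  comm : ∀ a, h (f a) = i (g a)
  injective_left : Injective h
  injective_right : Injective i
  jointly_surjective : ∀ d, (∃ b, h b = d) ∨ ∃ c, i c = d
  exists_of_eq : ∀ b c, h b = i c → ∃ a, f a = b ∧ g a = c

namespace IsInjPushout

section

variable {f : α → β} {g : α → γ} {h : β → δ} {i : γ → δ}

theorem exists_desc (po : IsInjPushout f g h i) (u : β → ε) (v : γ → ε)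
    (huv : ∀ a, u (f a) = v (g a)) :
    ∃ w : δ → ε, (∀ b, w (h b) = u b) ∧ ∀ c, w (i c) = v c := by
  have : ∀ d, ∃ z, (∀ b, h b = d → u b = z) ∧ ∀ c, i c = d → v c = z := by
    intro d
    rcases po.jointly_surjective d with ⟨b, rfl⟩ | ⟨c, rfl⟩
    · refine ⟨u b, fun b' hb' => congrArg u (po.injective_left hb'), fun c hc => ?_⟩
      obtain ⟨a, rfl, rfl⟩ := po.exists_of_eq b c hc.symm
      exact (huv a).symm
    · refine ⟨v c, fun b hb => ?_, fun c' hc' => congrArg v (po.injective_right hc')⟩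
      obtain ⟨a, rfl, rfl⟩ := po.exists_of_eq b c hb
      exact huv a
  choose w hw using this
  exact ⟨w, fun b => ((hw _).1 b rfl).symm, fun c => ((hw _).2 c rfl).symm⟩

theorem hom_ext (po : IsInjPushout f g h i) {w w' : δ → ε} (hh : ∀ b, w (h b) = w' (h b))
    (hi : ∀ c, w (i c) = w' (i c)) : w = w' :=
  funext fun d => by
    rcases po.jointly_surjective d with ⟨b, rfl⟩ | ⟨c, rfl⟩
    exacts [hh b, hi c]

theorem comp_bijective (po : IsInjPushout f g h i) {φ : δ → ε} (hφ : Bijective φ) :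
    IsInjPushout f g (φ ∘ h) (φ ∘ i) where
  comm a := congrArg φ (po.comm a)
  injective_left := hφ.1.comp po.injective_left
  injective_right := hφ.1.comp po.injective_right
  jointly_surjective e := by
    obtain ⟨d, rfl⟩ := hφ.2 e
    exact (po.jointly_surjective d).imp (fun ⟨b, hb⟩ => ⟨b, congrArg φ hb⟩)
      fun ⟨c, hc⟩ => ⟨c, congrArg φ hc⟩
  exists_of_eq b c hbc := po.exists_of_eq b c (hφ.1 hbc)

end

section Pasting

variable {Y P D G : Type*} {f : α → β} {y : α → Y} {b : β → P} {c : Y → P}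
  {k : α → D} {g : β → G} {d : D → G} {w : Y → D} {Q : P → G}

theorem mem_range_of_outer (left : IsInjPushout f y b c) (outer : IsInjPushout f k g d)
    (hQ : Injective Q) (hQb : ∀ x, Q (b x) = g x) (z : Y) : Q (c z) ∈ Set.range d := by
  rcases outer.jointly_surjective (Q (c z)) with ⟨x, hx⟩ | hz
  · obtain ⟨a, rfl, rfl⟩ := left.exists_of_eq x z (hQ ((hQb x).trans hx))
    exact ⟨k a, (outer.comm a).symm.trans hx⟩
  · exact hz

theorem right_of_outer (left : IsInjPushout f y b c) (outer : IsInjPushout f k g d)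
    (hw : Injective w) (hwy : ∀ a, w (y a) = k a) (hQb : ∀ x, Q (b x) = g x)
    (hQc : ∀ z, Q (c z) = d (w z)) : IsInjPushout c w Q d where
  comm := hQc
  injective_left := by
    have mixed : ∀ x z, Q (b x) = Q (c z) → b x = c z := by
      intro x z hxz
      rw [hQb, hQc] at hxz
      obtain ⟨a, rfl, ha⟩ := outer.exists_of_eq x (w z) hxz
      rw [← hwy] at ha
      rw [left.comm, hw ha]
    intro p p' hpp'
    rcases left.jointly_surjective p with ⟨x, rfl⟩ | ⟨z, rfl⟩ <;>
      rcases left.jointly_surjective p' with ⟨x', rfl⟩ | ⟨z', rfl⟩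
    · rw [hQb, hQb] at hpp'
      rw [outer.injective_left hpp']
    · exact mixed x z' hpp'
    · exact (mixed x' z hpp'.symm).symm
    · rw [hQc, hQc] at hpp'
      rw [hw (outer.injective_right hpp')]
  injective_right := outer.injective_right
  jointly_surjective e :=
    (outer.jointly_surjective e).imp_left fun ⟨x, hx⟩ => ⟨b x, (hQb x).trans hx⟩
  exists_of_eq p e hpe := by
    rcases left.jointly_surjective p with ⟨x, rfl⟩ | ⟨z, rfl⟩
    · rw [hQb] at hpe
      obtain ⟨a, rfl, rfl⟩ := outer.exists_of_eq x e hpe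
      exact ⟨y a, (left.comm a).symm, hwy a⟩
    · exact ⟨z, rfl, outer.injective_right ((hQc z).symm.trans hpe)⟩

end Pasting

end IsInjPushout

end InjPushout

section ConcretePushout

variable {α β γ α' β' γ' : Type*}

open Classical in
noncomputable def pushoutMap (f : α → β) (g : α → γ) (b : β) :
    γ ⊕ ↥(Set.range f)ᶜ :=
  if hb : b ∈ Set.range f then Sum.inl (g hb.choose) else Sum.inr ⟨b, hb⟩

variable {f : α → β} {g : α → γ}

theorem pushoutMap_apply (hf : Injective f) (a : α) : pushoutMap f g (f a) = Sum.inl (g a) := by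
  have ha : f a ∈ Set.range f := ⟨a, rfl⟩
  rw [pushoutMap, dif_pos ha, hf ha.choose_spec]

theorem pushoutMap_of_notMem {b : β} (hb : b ∉ Set.range f) :
    pushoutMap f g b = Sum.inr ⟨b, hb⟩ :=
  dif_neg hb

theorem isInjPushout_pushoutMap (hf : Injective f) (hg : Injective g) :
    IsInjPushout f g (pushoutMap f g) Sum.inl where
  comm := pushoutMap_apply hf
  injective_left b b' hbb' := by
    by_cases hb : b ∈ Set.range f <;> by_cases hb' : b' ∈ Set.range f
    · obtain ⟨a, rfl⟩ := hb
      obtain ⟨a', rfl⟩ := hb'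
      rw [pushoutMap_apply hf, pushoutMap_apply hf, Sum.inl.injEq] at hbb'
      rw [hg hbb']
    · obtain ⟨a, rfl⟩ := hb
      simp [pushoutMap_apply hf, pushoutMap_of_notMem hb'] at hbb'
    · obtain ⟨a', rfl⟩ := hb'
      simp [pushoutMap_apply hf, pushoutMap_of_notMem hb] at hbb'
    · simpa [pushoutMap_of_notMem hb, pushoutMap_of_notMem hb'] using hbb'
  injective_right := Sum.inl_injective
  jointly_surjective
    | .inl c => Or.inr ⟨c, rfl⟩
    | .inr ⟨b, hb⟩ => Or.inl ⟨b, pushoutMap_of_notMem hb⟩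
  exists_of_eq b c hbc := by
    by_cases hb : b ∈ Set.range f
    · obtain ⟨a, rfl⟩ := hb
      rw [pushoutMap_apply hf, Sum.inl.injEq] at hbc
      exact ⟨a, rfl, hbc⟩
    · simp [pushoutMap_of_notMem hb] at hbc

theorem pushoutMap_naturality {f' : α' → β'} {g' : α' → γ'} (hf : Injective f)
    (hf' : Injective f') {sα : α → α'} {sβ : β → β'} {sγ : γ → γ'}
    (hfs : ∀ a, sβ (f a) = f' (sα a)) (hgs : ∀ a, sγ (g a) = g' (sα a)) (b : β) :
    Sum.elim (Sum.inl ∘ sγ) (fun x : ↥(Set.range f)ᶜ => pushoutMap f' g' (sβ x.1))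
        (pushoutMap f g b) =
      pushoutMap f' g' (sβ b) := by
  by_cases hb : b ∈ Set.range f
  · obtain ⟨a, rfl⟩ := hb
    rw [pushoutMap_apply hf, hfs, pushoutMap_apply hf', Sum.elim_inl, comp_apply, hgs]
  · rw [pushoutMap_of_notMem hb, Sum.elim_inr]

end ConcretePushout

section PushoutComplement

variable {κ ρ γ δ η : Type*}

def pushoutCompl (r : κ → ρ) (a : ρ → γ) : Set γ := (a '' (Set.range r)ᶜ)ᶜ

variable {r : κ → ρ} {a : ρ → γ}

theorem mem_pushoutCompl {c : γ} :
    c ∈ pushoutCompl r a ↔ ∀ x, a x = c → x ∈ Set.range r := by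
  simp only [pushoutCompl, Set.mem_compl_iff, Set.mem_image, not_exists, not_and]
  exact forall_congr' fun x =>
    ⟨fun h hx => not_not.1 fun hr => h hr hx, fun h hr hx => hr (h hx)⟩

theorem apply_mem_pushoutCompl (ha : Injective a) (k : κ) : a (r k) ∈ pushoutCompl r a :=
  mem_pushoutCompl.2 fun _ hx => ⟨k, ha hx.symm⟩

theorem isInjPushout_pushoutCompl (ha : Injective a) :
    IsInjPushout r (Set.codRestrict (a ∘ r) (pushoutCompl r a) (apply_mem_pushoutCompl ha)) a
      Subtype.val where
  comm _ := rfl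
  injective_left := ha
  injective_right := Subtype.val_injective
  jointly_surjective c := by
    by_cases hc : c ∈ pushoutCompl r a
    · exact Or.inr ⟨⟨c, hc⟩, rfl⟩
    · obtain ⟨x, -, hx⟩ := not_not.1 hc
      exact Or.inl ⟨x, hx⟩
  exists_of_eq x c hxc := by
    obtain ⟨k, rfl⟩ := mem_pushoutCompl.1 c.2 x hxc
    exact ⟨k, rfl, Subtype.ext hxc⟩

theorem IsInjPushout.mem_pushoutCompl_iff {k : κ → δ} {h : ρ → η} {d : δ → η}
    (po : IsInjPushout r k h d) {q : γ → η} (hq : Injective q) (hqa : ∀ x, q (a x) = h x)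
    {c : γ} : c ∈ pushoutCompl r a ↔ q c ∈ Set.range d := by
  constructor
  · intro hc
    rcases po.jointly_surjective (q c) with ⟨x, hx⟩ | hqc
    · obtain ⟨k₀, rfl⟩ := mem_pushoutCompl.1 hc x (hq ((hqa x).trans hx))
      exact ⟨k k₀, (po.comm k₀).symm.trans hx⟩
    · exact hqc
  · rintro ⟨e, he⟩
    refine mem_pushoutCompl.2 fun x hx => ?_
    obtain ⟨k₀, hk₀, -⟩ := po.exists_of_eq x e (by rw [← hqa, hx, he])
    exact ⟨k₀, hk₀⟩

end PushoutComplement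

attribute [ext] GraphHom

namespace GraphHom

variable {A B C : MGraph}

protected def id (G : MGraph) : GraphHom G G :=
  ⟨fun v => v, fun e => e, fun _ => rfl, fun _ => rfl⟩

theorem congr_fV {f f' : GraphHom A B} (h : f = f') (v : A.V) : f.fV v = f'.fV v := h ▸ rfl

theorem congr_fE {f f' : GraphHom A B} (h : f = f') (e : A.E) : f.fE e = f'.fE e := h ▸ rfl

theorem Injective.comp {g : GraphHom B C} {f : GraphHom A B} (hg : g.Injective)
    (hf : f.Injective) : (g.comp f).Injective :=
  ⟨hg.1.comp hf.1, hg.2.comp hf.2⟩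

theorem Injective.of_comp {g : GraphHom B C} {f : GraphHom A B} (h : (g.comp f).Injective) :
    f.Injective :=
  ⟨Function.Injective.of_comp (f := g.fV) h.1, Function.Injective.of_comp (f := g.fE) h.2⟩

theorem Injective.comp_left_cancel {d : GraphHom B C} (hd : d.Injective) {u v : GraphHom A B}
    (h : d.comp u = d.comp v) : u = v :=
  GraphHom.ext (funext fun x => hd.1 (congr_fV h x)) (funext fun x => hd.2 (congr_fE h x))

theorem exists_comp_eq_of_mem_range (m : GraphHom A C) {d : GraphHom B C} (hd : d.Injective)
    (hV : ∀ v, m.fV v ∈ Set.range d.fV) (hE : ∀ e, m.fE e ∈ Set.range d.fE) :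
    ∃ w : GraphHom A B, d.comp w = m := by
  choose wV hwV using hV
  choose wE hwE using hE
  refine ⟨⟨wV, wE, fun e => hd.1 ?_, fun e => hd.1 ?_⟩,
    GraphHom.ext (funext hwV) (funext hwE)⟩
  · rw [← d.src, hwE, m.src, hwV]
  · rw [← d.tgt, hwE, m.tgt, hwV]

end GraphHom

section InjPushoutSq

variable {A B C D : MGraph}

structure IsInjPushoutSq (f : GraphHom A B) (g : GraphHom A C) (h : GraphHom B D)
    (i : GraphHom C D) : Prop where
  V : IsInjPushout f.fV g.fV h.fV i.fV
  E : IsInjPushout f.fE g.fE h.fE i.fE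

namespace IsInjPushoutSq

variable {f : GraphHom A B} {g : GraphHom A C} {h : GraphHom B D} {i : GraphHom C D}

theorem comm (po : IsInjPushoutSq f g h i) : h.comp f = i.comp g :=
  GraphHom.ext (funext po.V.comm) (funext po.E.comm)

theorem injective_left (po : IsInjPushoutSq f g h i) : h.Injective :=
  ⟨po.V.injective_left, po.E.injective_left⟩

theorem injective_right (po : IsInjPushoutSq f g h i) : i.Injective :=
  ⟨po.V.injective_right, po.E.injective_right⟩

theorem isPushoutSq (po : IsInjPushoutSq f g h i) : IsPushoutSq f g h i where
  comm := po.comm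
  desc {Z} u v huv := by
    obtain ⟨wV, hwVh, hwVi⟩ :=
      po.V.exists_desc u.fV v.fV (GraphHom.congr_fV huv)
    obtain ⟨wE, hwEh, hwEi⟩ :=
      po.E.exists_desc u.fE v.fE (GraphHom.congr_fE huv)
    have src : ∀ e, Z.s (wE e) = wV (D.s e) := fun e => by
      rcases po.E.jointly_surjective e with ⟨b, rfl⟩ | ⟨c, rfl⟩
      · rw [hwEh, h.src, hwVh, u.src]
      · rw [hwEi, i.src, hwVi, v.src]
    have tgt : ∀ e, Z.t (wE e) = wV (D.t e) := fun e => by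
      rcases po.E.jointly_surjective e with ⟨b, rfl⟩ | ⟨c, rfl⟩
      · rw [hwEh, h.tgt, hwVh, u.tgt]
      · rw [hwEi, i.tgt, hwVi, v.tgt]
    refine ⟨⟨wV, wE, src, tgt⟩, ⟨GraphHom.ext (funext hwVh) (funext hwEh),
      GraphHom.ext (funext hwVi) (funext hwEi)⟩, fun w ⟨hwh, hwi⟩ => GraphHom.ext ?_ ?_⟩
    · exact po.V.hom_ext (fun b => (GraphHom.congr_fV hwh b).trans (hwVh b).symm)
        fun c => (GraphHom.congr_fV hwi c).trans (hwVi c).symm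
    · exact po.E.hom_ext (fun b => (GraphHom.congr_fE hwh b).trans (hwEh b).symm)
        fun c => (GraphHom.congr_fE hwi c).trans (hwEi c).symm

theorem comp_iso (po : IsInjPushoutSq f g h i) {E : MGraph} {φ : GraphHom D E}
    {ψ : GraphHom E D} (hψφ : ψ.comp φ = GraphHom.id D) (hφψ : φ.comp ψ = GraphHom.id E) :
    IsInjPushoutSq f g (φ.comp h) (φ.comp i) :=
  ⟨po.V.comp_bijective (bijective_iff_has_inverse.2
      ⟨ψ.fV, GraphHom.congr_fV hψφ, GraphHom.congr_fV hφψ⟩),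
    po.E.comp_bijective (bijective_iff_has_inverse.2
      ⟨ψ.fE, GraphHom.congr_fE hψφ, GraphHom.congr_fE hφψ⟩)⟩

end IsInjPushoutSq

namespace IsInjPushoutSq

variable {Y P G : MGraph} {f : GraphHom A B} {y : GraphHom A Y} {b : GraphHom B P}
  {c : GraphHom Y P} {k : GraphHom A D} {g : GraphHom B G} {d : GraphHom D G}

theorem right_of_outer (left : IsInjPushoutSq f y b c) (outer : IsInjPushoutSq f k g d)
    {w : GraphHom Y D} {Q : GraphHom P G} (hw : w.Injective) (hwy : w.comp y = k)
    (hQb : Q.comp b = g) (hQc : Q.comp c = d.comp w) : IsInjPushoutSq c w Q d :=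
  ⟨left.V.right_of_outer outer.V hw.1 (GraphHom.congr_fV hwy) (GraphHom.congr_fV hQb)
      (GraphHom.congr_fV hQc),
    left.E.right_of_outer outer.E hw.2 (GraphHom.congr_fE hwy) (GraphHom.congr_fE hQb)
      (GraphHom.congr_fE hQc)⟩

theorem exists_restrict (left : IsInjPushoutSq f y b c) (outer : IsInjPushoutSq f k g d)
    {Q : GraphHom P G} (hQ : Q.Injective) (hQb : Q.comp b = g) :
    ∃ w : GraphHom Y D, w.Injective ∧ w.comp y = k ∧ IsInjPushoutSq c w Q d := by
  obtain ⟨w, hw⟩ := (Q.comp c).exists_comp_eq_of_mem_range outer.injective_right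
    (left.V.mem_range_of_outer outer.V hQ.1 (GraphHom.congr_fV hQb))
    (left.E.mem_range_of_outer outer.E hQ.2 (GraphHom.congr_fE hQb))
  have hw_inj : w.Injective := GraphHom.Injective.of_comp (hw ▸ hQ.comp left.injective_right)
  have hwy : w.comp y = k := outer.injective_right.comp_left_cancel <|
    calc d.comp (w.comp y) = Q.comp (c.comp y) := congrArg (·.comp y) hw
      _ = Q.comp (b.comp f) := by rw [left.comm]
      _ = d.comp k := by rw [← outer.comm, ← hQb]; rfl
  exact ⟨w, hw_inj, hwy, left.right_of_outer outer hw_inj hwy hQb hw.symm⟩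

theorem exists_extend (left : IsInjPushoutSq f y b c) (outer : IsInjPushoutSq f k g d)
    {w : GraphHom Y D} (hw : w.Injective) (hwy : w.comp y = k) :
    ∃ Q : GraphHom P G, Q.comp b = g ∧ IsInjPushoutSq c w Q d := by
  obtain ⟨Q, ⟨hQb, hQc⟩, -⟩ :=
    left.isPushoutSq.desc g (d.comp w) (by rw [outer.comm, ← hwy]; rfl)
  exact ⟨Q, hQb, left.right_of_outer outer hw hwy hQb hQc⟩

end IsInjPushoutSq

end InjPushoutSq

section PushoutGraph

variable {A B C : MGraph} (f : GraphHom A B) (g : GraphHom A C)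

noncomputable def pushoutGraph : MGraph where
  V := C.V ⊕ ↥(Set.range f.fV)ᶜ
  E := C.E ⊕ ↥(Set.range f.fE)ᶜ
  s := Sum.elim (Sum.inl ∘ C.s) fun e => pushoutMap f.fV g.fV (B.s e.1)
  t := Sum.elim (Sum.inl ∘ C.t) fun e => pushoutMap f.fV g.fV (B.t e.1)

noncomputable def pushoutInl (hf : f.Injective) : GraphHom B (pushoutGraph f g) where
  fV := pushoutMap f.fV g.fV
  fE := pushoutMap f.fE g.fE
  src := pushoutMap_naturality hf.2 hf.1 f.src g.src
  tgt := pushoutMap_naturality hf.2 hf.1 f.tgt g.tgt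

def pushoutInr : GraphHom C (pushoutGraph f g) :=
  ⟨Sum.inl, Sum.inl, fun _ => rfl, fun _ => rfl⟩

variable {f g}

theorem isInjPushoutSq_pushout (hf : f.Injective) (hg : g.Injective) :
    IsInjPushoutSq f g (pushoutInl f g hf) (pushoutInr f g) :=
  ⟨isInjPushout_pushoutMap hf.1 hg.1, isInjPushout_pushoutMap hf.2 hg.2⟩

theorem pushoutGraph_finite (hB : B.Finite) (hC : C.Finite) : (pushoutGraph f g).Finite := by
  obtain ⟨_, _⟩ := hB
  obtain ⟨_, _⟩ := hC
  exact ⟨inferInstanceAs (Finite (C.V ⊕ _)), inferInstanceAs (Finite (C.E ⊕ _))⟩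

end PushoutGraph

section ComplementGraph

variable {K R C : MGraph} (r : GraphHom K R) (a : GraphHom R C)

def DanglingCondition : Prop :=
  ∀ e ∈ pushoutCompl r.fE a.fE,
    C.s e ∈ pushoutCompl r.fV a.fV ∧ C.t e ∈ pushoutCompl r.fV a.fV

variable (hd : DanglingCondition r a)

def complGraph : MGraph where
  V := pushoutCompl r.fV a.fV
  E := pushoutCompl r.fE a.fE
  s e := ⟨C.s e, (hd e e.2).1⟩
  t e := ⟨C.t e, (hd e e.2).2⟩

def complIncl : GraphHom (complGraph r a hd) C :=
  ⟨Subtype.val, Subtype.val, fun _ => rfl, fun _ => rfl⟩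

def complRestrict (ha : a.Injective) : GraphHom K (complGraph r a hd) where
  fV := Set.codRestrict (a.fV ∘ r.fV) _ (apply_mem_pushoutCompl ha.1)
  fE := Set.codRestrict (a.fE ∘ r.fE) _ (apply_mem_pushoutCompl ha.2)
  src e := Subtype.ext <| by
    simp only [complGraph, Set.val_codRestrict_apply, comp_apply, a.src, r.src]
  tgt e := Subtype.ext <| by
    simp only [complGraph, Set.val_codRestrict_apply, comp_apply, a.tgt, r.tgt]

variable {r a}

theorem complIncl_injective : (complIncl r a hd).Injective :=
  ⟨Subtype.val_injective, Subtype.val_injective⟩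

theorem complRestrict_injective (ha : a.Injective) (hr : r.Injective) :
    (complRestrict r a hd ha).Injective :=
  ⟨fun _ _ h => hr.1 (ha.1 (congrArg Subtype.val h)),
    fun _ _ h => hr.2 (ha.2 (congrArg Subtype.val h))⟩

theorem isInjPushoutSq_compl (ha : a.Injective) :
    IsInjPushoutSq r (complRestrict r a hd ha) a (complIncl r a hd) :=
  ⟨isInjPushout_pushoutCompl ha.1, isInjPushout_pushoutCompl ha.2⟩

theorem complGraph_finite (hC : C.Finite) : (complGraph r a hd).Finite := by
  obtain ⟨_, _⟩ := hC
  exact ⟨Subtype.finite, Subtype.finite⟩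

theorem IsInjPushoutSq.danglingCondition {D H : MGraph} {k : GraphHom K D} {h : GraphHom R H}
    {dH : GraphHom D H} (po : IsInjPushoutSq r k h dH) {q : GraphHom C H} (hq : q.Injective)
    (hqa : q.comp a = h) : DanglingCondition r a := by
  intro e he
  obtain ⟨e', he'⟩ := (po.E.mem_pushoutCompl_iff hq.2 (GraphHom.congr_fE hqa)).1 he
  simp only [po.V.mem_pushoutCompl_iff hq.1 (GraphHom.congr_fV hqa)]
  exact ⟨⟨D.s e', by rw [← dH.src, he', q.src]⟩,
    ⟨D.t e', by rw [← dH.tgt, he', q.tgt]⟩⟩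

end ComplementGraph

namespace IsPushoutSq

variable {A B C D : MGraph} {f : GraphHom A B} {g : GraphHom A C} {h : GraphHom B D}
  {i : GraphHom C D}

theorem hom_ext (sq : IsPushoutSq f g h i) {Z : MGraph} {w w' : GraphHom D Z}
    (hh : w.comp h = w'.comp h) (hi : w.comp i = w'.comp i) : w = w' := by
  obtain ⟨u, -, hu⟩ := sq.desc (w.comp h) (w.comp i) (congrArg w.comp sq.comm)
  exact (hu w ⟨rfl, rfl⟩).trans (hu w' ⟨hh.symm, hi.symm⟩).symm

theorem isInjPushoutSq (sq : IsPushoutSq f g h i) (hf : f.Injective) (hg : g.Injective) :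
    IsInjPushoutSq f g h i := by
  have po := isInjPushoutSq_pushout hf hg
  obtain ⟨ψ, ⟨hψb, hψc⟩, -⟩ := sq.desc _ _ po.comm
  obtain ⟨φ, ⟨hφh, hφi⟩, -⟩ := po.isPushoutSq.desc h i sq.comm
  have hφψ : φ.comp ψ = GraphHom.id D :=
    sq.hom_ext ((congrArg φ.comp hψb).trans hφh) ((congrArg φ.comp hψc).trans hφi)
  have hψφ : ψ.comp φ = GraphHom.id _ :=
    po.isPushoutSq.hom_ext ((congrArg ψ.comp hφh).trans hψb) ((congrArg ψ.comp hφi).trans hψc)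
  rw [← hφh, ← hφi]
  exact po.comp_iso hψφ hφψ

end IsPushoutSq

open Classical in
noncomputable def Cond.toLeft : {K L R : MGraph} → (l : GraphHom K L) → l.Injective →
    L.Finite → (r : GraphHom K R) → r.Injective → Cond R → Cond L
  | _, L, _, _, _, _, _, _, .tru _ => .tru L
  | _, _, _, l, hl, hL, r, hr, .not c => .not (c.toLeft l hl hL r hr)
  | _, _, _, l, hl, hL, r, hr, .and c₁ c₂ =>
    .and (c₁.toLeft l hl hL r hr) (c₂.toLeft l hl hL r hr)
  | _, L, _, l, hl, hL, r, hr, .ex a hC ha c =>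
    if hd : DanglingCondition r a then
      .ex (pushoutInl l (complRestrict r a hd ha) hl)
        (pushoutGraph_finite hL (complGraph_finite hd hC))
        (isInjPushoutSq_pushout hl (complRestrict_injective hd ha hr)).injective_left
        (c.toLeft (pushoutInr l (complRestrict r a hd ha))
          (isInjPushoutSq_pushout hl (complRestrict_injective hd ha hr)).injective_right
          (pushoutGraph_finite hL (complGraph_finite hd hC))
          (complIncl r a hd) (complIncl_injective hd))
    else .not (.tru L)

theorem sat_toLeft_iff {R : MGraph} (c : Cond R) {K L D G H : MGraph} {l : GraphHom K L}
    (hl : l.Injective) (hL : L.Finite) {r : GraphHom K R} (hr : r.Injective)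
    {g : GraphHom L G} {h : GraphHom R H} {k : GraphHom K D} {dG : GraphHom D G}
    {dH : GraphHom D H} (poL : IsInjPushoutSq l k g dG) (poR : IsInjPushoutSq r k h dH) :
    Sat g (c.toLeft l hl hL r hr) ↔ Sat h c := by
  induction c generalizing K L D G H with
  | tru => exact Iff.rfl
  | not c ih => exact not_congr (ih hl hL hr poL poR)
  | and c₁ c₂ ih₁ ih₂ => exact and_congr (ih₁ hl hL hr poL poR) (ih₂ hl hL hr poL poR)
  | ex a hC ha c ih =>
    by_cases hd : DanglingCondition r a
    · have leftL := isInjPushoutSq_pushout hl (complRestrict_injective hd ha hr)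
      have leftR := isInjPushoutSq_compl hd ha
      simp only [Cond.toLeft, dif_pos hd, Sat]
      constructor
      · rintro ⟨Q, hQ, hQb, hQc⟩
        obtain ⟨w, hw, hwy, poL'⟩ := leftL.exists_restrict poL hQ hQb
        obtain ⟨q, hqa, poR'⟩ := leftR.exists_extend poR hw hwy
        exact ⟨q, poR'.injective_left, hqa, (ih _ _ _ poL' poR').1 hQc⟩
      · rintro ⟨q, hq, hqa, hqc⟩
        obtain ⟨w, hw, hwy, poR'⟩ := leftR.exists_restrict poR hq hqa
        obtain ⟨Q, hQb, poL'⟩ := leftL.exists_extend poL hw hwy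
        exact ⟨Q, poL'.injective_left, hQb, (ih _ _ _ poL' poR').2 hqc⟩
    · simp only [Cond.toLeft, dif_neg hd, Sat, not_true, false_iff]
      rintro ⟨q, hq, hqa, -⟩
      exact hd (poR.danglingCondition hq hqa)

theorem left_lemma_general {K L R : MGraph} (hL : L.Finite)
    (l : GraphHom K L) (hl : l.Injective) (r : GraphHom K R) (hr : r.Injective)
    (ac : Cond R) :
    ∃ ac' : Cond L,
      ∀ (G H D : MGraph) (g : GraphHom L G) (h : GraphHom R H) (k : GraphHom K D)
        (dG : GraphHom D G) (dH : GraphHom D H),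
        g.Injective → h.Injective →
        IsPushoutSq l k g dG → IsPushoutSq r k h dH →
        (Sat g ac' ↔ Sat h ac) := by
  refine ⟨ac.toLeft l hl hL r hr, fun G H D g h k dG dH hg _ sqL sqR => ?_⟩
  have hk : k.Injective := GraphHom.Injective.of_comp (g := dG) (sqL.comm ▸ hg.comp hl)
  exact sat_toLeft_iff ac hl hL hr (sqL.isInjPushoutSq hl hk) (sqR.isInjPushoutSq hr hk)

/-- Left lemma: for a rule `p = ⟨L ↩l K ↪r R⟩` of finite directed multigraphs and a
condition `ac` over `R`, there is a condition `ac'` over `L` such that for every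
direct transformation `G ⇒_{p,g,h} H` (two pushout squares over an intermediate
graph `D`) with injective match `g : L → G` and injective comatch `h : R → H`,
`g ⊨ ac'` iff `h ⊨ ac`. -/
theorem left_lemma {K L R : MGraph} (hL : L.Finite) (hK : K.Finite) (hR : R.Finite)
    (l : GraphHom K L) (hl : l.Injective) (r : GraphHom K R) (hr : r.Injective)
    (ac : Cond R) :
    ∃ ac' : Cond L,
      ∀ (G H D : MGraph) (g : GraphHom L G) (h : GraphHom R H) (k : GraphHom K D)
        (dG : GraphHom D G) (dH : GraphHom D H),
        g.Injective → h.Injective →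
        IsPushoutSq l k g dG → IsPushoutSq r k h dH →
        (Sat g ac' ↔ Sat h ac) :=
  left_lemma_general hL l hl r hr ac
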